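/- arXiv:2102.09116 — 2 statements merged into one kernel-verified Lean document; each statement's English description precedes it below -/
import Mathlib

section
/- Let n, ℓ, m, ε be integers with ε = 1 or ε = −1. Let V be the 2×2 integer matrix with rows (n, ℓ) and (ℓ+ε, m), and let V′ be the 2×2 integer matrix with rows (n+ε, ℓ) and (ℓ+ε, m). Let p(X) = det(V − X·Vᵀ) and q(X) = det(V′ − X·V′ᵀ), computed in ℤ[X] by substituting the integer entries. If there exist s ∈ {1, −1} and natural numbers a, b such that X^a · p(X) = s · X^b · q(X) in ℤ[X], then m = 0. -/
open Polynomial Matrix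

/-- If the Alexander polynomials `det(V - X Vᵀ)` and `det(V' - X V'ᵀ)` of the Seifert
matrices `V = [[n, ℓ],[ℓ+ε, m]]` and `V' = [[n+ε, ℓ],[ℓ+ε, m]]` (with `ε = ±1`) agree
up to multiplication by `± X^k`, then `m = 0`. -/
theorem m_eq_zero_of_alexander_eq (n ℓ m ε : ℤ) (hε : ε = 1 ∨ ε = -1)
    (V V' : Matrix (Fin 2) (Fin 2) ℤ)
    (hV : V = !![n, ℓ; ℓ + ε, m]) (hV' : V' = !![n + ε, ℓ; ℓ + ε, m])
    (p q : ℤ[X])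
    (hp : p = (Matrix.of fun i j : Fin 2 => (C (V i j) - X * C (Vᵀ i j) : ℤ[X])).det)
    (hq : q = (Matrix.of fun i j : Fin 2 => (C (V' i j) - X * C (V'ᵀ i j) : ℤ[X])).det)
    (h : ∃ s : ℤ, (s = 1 ∨ s = -1) ∧ ∃ a b : ℕ, X ^ a * p = C s * (X ^ b * q)) :
    m = 0 := by
  obtain ⟨s, hs, a, b, hab⟩ := h
  subst hV hV' hp hq
  have h1 := congrArg (Polynomial.eval (1 : ℤ)) hab
  have h2 := congrArg (Polynomial.eval (-1 : ℤ)) hab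
  simp only [Matrix.det_fin_two, Matrix.of_apply, Matrix.transpose_apply,
    Matrix.cons_val', Matrix.cons_val_zero, Matrix.cons_val_one, Matrix.head_cons,
    Matrix.empty_val', Matrix.cons_val_fin_one, Matrix.head_fin_const,
    eval_mul, eval_pow, eval_sub, eval_C, eval_X, one_pow] at h1 h2
  -- from evaluation at 1, since p(1) = q(1) = ε² = 1, we get s = 1
  have hs1 : s = 1 := by
    rcases hε with rfl | rfl <;> rcases hs with rfl | rfl <;> first | rfl | nlinarith [h1]
  subst hs1
  clear h1 hs hab
  have key : ∀ x : ℕ, ((-1 : ℤ)) ^ x = 1 ∨ ((-1 : ℤ)) ^ x = -1 := fun x =>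
    (Nat.even_or_odd x).imp (fun hx => hx.neg_one_pow) (fun hx => hx.neg_one_pow)
  obtain ⟨u, hu⟩ : ∃ u, u = n * m := ⟨_, rfl⟩
  obtain ⟨v, hv⟩ : ∃ v, v = ℓ * ℓ := ⟨_, rfl⟩
  rcases key a with ha | ha <;> rcases key b with hb | hb <;> rw [ha, hb] at h2 <;>
    rcases hε with rfl | rfl
  · nlinarith [h2]
  · nlinarith [h2]
  · have h3 : 8 * u + 4 * m = 8 * v + 8 * ℓ + 2 := by
      rw [hu, hv]; linear_combination h2
    omega
  · have h3 : 8 * u - 4 * m = 8 * v - 8 * ℓ + 2 := by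
      rw [hu, hv]; linear_combination h2
    omega
  · have h3 : 8 * u + 4 * m = 8 * v + 8 * ℓ + 2 := by
      rw [hu, hv]; linear_combination -h2
    omega
  · have h3 : 8 * u - 4 * m = 8 * v - 8 * ℓ + 2 := by
      rw [hu, hv]; linear_combination -h2
    omega
  · nlinarith [h2]
  · nlinarith [h2]
end

section
/- Let d and v be integers. If, in the Laurent polynomial ring ℚ[t, t⁻¹], the element d·(−2 − ((2d+1)/3)·(t + t⁻¹ − 2)) − 4v·(d·t + (1−2d) + d·t⁻¹) is zero, then d = 0 and v = 0. -/
open LaurentPolynomial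

/-! Collecting powers of `t`, the expression is `a t + b + a t⁻¹` with `a = -d (2(d + 6v) + 1) / 3`
and `b = -4v` once `d = 0`. The factor `2(d + 6v) + 1` is odd, so `a = 0` forces `d = 0`, and then
`b = 0` forces `v = 0`. -/

theorem LaurentPolynomial.C_mul_T_one_add_C_add_C_mul_T_neg_one_eq_zero_iff {R : Type*} [Semiring R]
    (a b c : R) : C a * T 1 + C b + C c * T (-1) = 0 ↔ a = 0 ∧ b = 0 ∧ c = 0 := by
  refine ⟨fun h => ?_, by rintro ⟨rfl, rfl, rfl⟩; simp⟩
  have coeff (n : ℤ) := congrArg (fun p : R[T;T⁻¹] => p.coeff n) h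
  simp only [← single_eq_C_mul_T, AddMonoidAlgebra.coeff_add, AddMonoidAlgebra.coeff_single,
    C_apply, Finsupp.add_apply, Finsupp.single_apply] at coeff
  exact ⟨by simpa using coeff 1, by simpa using coeff 0, by simpa using coeff (-1)⟩

/-- If the difference of reduced 2-loop polynomials vanishes in `ℚ[t,t⁻¹]`,
then `d = 0` and `v = 0`. -/
theorem d_eq_zero_and_v_eq_zero_of_laurent_eq_zero (d v : ℤ)
    (h : (C (d : ℚ) * (-2 - C ((2 * (d : ℚ) + 1) / 3) * (T 1 + T (-1) - 2))
        - C (4 * (v : ℚ)) * (C (d : ℚ) * T 1 + C (1 - 2 * (d : ℚ)) + C (d : ℚ) * T (-1))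
      : LaurentPolynomial ℚ) = 0) :
    d = 0 ∧ v = 0 := by
  set q : ℚ := (2 * d + 1) / 3
  have h_normal_form : C (-(d * q) - 4 * v * d) * T 1 + C (2 * d * (q - 1) - 4 * v * (1 - 2 * d))
      + C (-(d * q) - 4 * v * d) * T (-1) = 0 := by
    rw [← h]
    simp only [map_sub, map_mul, map_neg, map_ofNat, map_one]
    ring
  obtain ⟨hT1, hT0, -⟩ := (C_mul_T_one_add_C_add_C_mul_T_neg_one_eq_zero_iff _ _ _).mp h_normal_form
  have h_odd_factor : d * (2 * (d + 6 * v) + 1) = 0 := by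
    have : (d : ℚ) * (2 * (d + 6 * v) + 1) = 0 := by linear_combination -3 * hT1
    exact_mod_cast this
  have hd : d = 0 := (mul_eq_zero.mp h_odd_factor).resolve_right (by omega)
  subst hd
  exact ⟨rfl, by simpa using hT0⟩
end
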